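/- Let n be a positive integer and g an analytic function defined in a neighborhood of 1. Then the limit as (z_1,...,z_n) → (1,...,1) of the sum over i=1..n of g(z_i) divided by the product over j ≠ i of (z_i - z_j) equals the (n-1)-st derivative of g at 1 divided by (n-1)!. -/

import Mathlib

/-!
The sum is the divided difference of `g` at the nodes `z i`. For nodes inside a circle around `1`
on which `g` is holomorphic, partial fractions (the barycentric form of Lagrange interpolation)
and Cauchy's integral formula give Hermite's representation
`∑ i, g (z i) / ∏_{j ≠ i} (z i - z j) = (2πi)⁻¹ ∮ g w / ∏ j (w - z j) dw`.
The right-hand side is continuous in the nodes up to the diagonal, where it becomes the Cauchy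
integral for `g^{(n-1)}(1) / (n-1)!`.
-/

open Filter Topology Metric Finset Complex Lagrange Real

namespace Lagrange

theorem sum_nodalWeight_mul_inv_sub {F ι : Type*} [Field F] [DecidableEq ι] {s : Finset ι}
    {v : ι → F} {x : F} (hvs : Set.InjOn v s) (hs : s.Nonempty) (hx : ∀ i ∈ s, x ≠ v i) :
    ∑ i ∈ s, nodalWeight s v i * (x - v i)⁻¹ = ∏ i ∈ s, (x - v i)⁻¹ := by
  have h := eval_interpolate_not_at_node (1 : ι → F) hx
  simp only [interpolate_one hvs hs, Polynomial.eval_one, eval_nodal, Pi.one_apply,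
    mul_one] at h
  rw [prod_inv_distrib]
  exact eq_inv_of_mul_eq_one_right h.symm

end Lagrange

variable {E : Type*} [NormedAddCommGroup E] [NormedSpace ℂ E]
  {ι : Type*} [Fintype ι] {f : ℂ → E} {c : ℂ} {R : ℝ}

theorem circleIntegral_prod_inv_sub_smul [CompleteSpace E] [DecidableEq ι] [Nonempty ι]
    (hf : DifferentiableOn ℂ f (closedBall c R)) {z : ι → ℂ} (hz : Function.Injective z)
    (hzR : ∀ i, z i ∈ ball c R) :
    ∮ w in C(c, R), (∏ i, (w - z i)⁻¹) • f w
      = (2 * π * I) • ∑ i, nodalWeight univ z i • f (z i) := by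
  have hR : 0 < R := pos_of_mem_ball (hzR (Classical.arbitrary ι))
  have hsphere : ∀ w ∈ sphere c R, ∀ i, w - z i ≠ 0 := fun w hw i =>
    sub_ne_zero.2 (sphere_disjoint_ball.ne_of_mem hw (hzR i))
  have hint : ∀ i, CircleIntegrable (fun w => nodalWeight univ z i • (w - z i)⁻¹ • f w) c R :=
    fun i => continuousOn_const.smul
      (((continuousOn_id.sub continuousOn_const).inv₀ (fun w hw => hsphere w hw i)).smul
        (hf.continuousOn.mono sphere_subset_closedBall)) |>.circleIntegrable hR.le
  calc ∮ w in C(c, R), (∏ i, (w - z i)⁻¹) • f w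
      = ∮ w in C(c, R), ∑ i, nodalWeight univ z i • (w - z i)⁻¹ • f w := by
        refine circleIntegral.integral_congr hR.le fun w hw => ?_
        rw [← sum_nodalWeight_mul_inv_sub hz.injOn univ_nonempty
          fun i _ => sub_ne_zero.1 (hsphere w hw i), sum_smul]
        simp only [mul_smul]
    _ = ∑ i, nodalWeight univ z i • ∮ w in C(c, R), (w - z i)⁻¹ • f w := by
        rw [circleIntegral.integral_fun_sum
          (f := fun i w => nodalWeight univ z i • (w - z i)⁻¹ • f w) fun i _ => hint i]
        simp only [circleIntegral.integral_smul]
    _ = (2 * π * I) • ∑ i, nodalWeight univ z i • f (z i) := by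
        simp only [hf.circleIntegral_sub_inv_smul (hzR _), smul_sum, smul_comm (2 * π * I : ℂ)]

theorem continuousOn_circleIntegral_prod_inv_sub_smul (hR : 0 ≤ R)
    (hf : ContinuousOn f (sphere c R)) :
    ContinuousOn (fun z : ι → ℂ => ∮ w in C(c, R), (∏ i, (w - z i)⁻¹) • f w)
      (Set.univ.pi fun _ => ball c R) := by
  rw [continuousOn_iff_continuous_domRestrict]
  refine intervalIntegral.continuous_parametric_intervalIntegral_of_continuous' ?_ 0 (2 * π)
  have hmem : ∀ θ, circleMap c R θ ∈ sphere c R := circleMap_mem_sphere c hR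
  simp only [deriv_circleMap]
  refine (by fun_prop : Continuous fun p : _ × ℝ => circleMap 0 R p.2 * I).smul
    (Continuous.smul ?_ (hf.comp_continuous (by fun_prop) fun p => hmem p.2))
  refine continuous_finsetProd _ fun i _ => Continuous.inv₀ ?_ fun p => ?_
  · exact (by fun_prop : Continuous fun p : _ × ℝ => circleMap c R p.2).sub
      ((continuous_apply i).comp (continuous_subtype_val.comp continuous_fst))
  · exact sub_ne_zero.2 (sphere_disjoint_ball.ne_of_mem (hmem p.2) (p.1.2 i trivial))

theorem circleIntegral_prod_inv_sub_center_smul [CompleteSpace E] (hR : 0 < R)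
    (hf : DifferentiableOn ℂ f (closedBall c R)) (n : ℕ) :
    ∮ w in C(c, R), (∏ _i : Fin (n + 1), (w - c)⁻¹) • f w
      = (2 * π * I / n.factorial) • iteratedDeriv n f c := by
  simpa only [prod_const, card_fin, inv_pow, one_div] using
    hf.circleIntegral_one_div_sub_center_pow_smul hR n

theorem tendsto_sum_nodalWeight_smul [CompleteSpace E] {s : Set ℂ} (hs : s ∈ 𝓝 c)
    (hf : DifferentiableOn ℂ f s) (n : ℕ) :
    Tendsto (fun z : Fin (n + 1) → ℂ => ∑ i, nodalWeight univ z i • f (z i))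
      (𝓝[{z | Function.Injective z}] fun _ => c)
      (𝓝 ((n.factorial : ℂ)⁻¹ • iteratedDeriv n f c)) := by
  obtain ⟨R, hR, hRs⟩ := nhds_basis_closedBall.mem_iff.1 hs
  have hfR := hf.mono hRs
  have hball : (Set.univ.pi fun _ : Fin (n + 1) => ball c R) ∈ 𝓝 fun _ => c :=
    set_pi_mem_nhds Set.finite_univ fun _ _ => ball_mem_nhds c hR
  have hcont := (continuousOn_circleIntegral_prod_inv_sub_smul hR.le
    (hfR.continuousOn.mono sphere_subset_closedBall)).continuousAt hball
  have hlim := (hcont.tendsto.const_smul (2 * π * I)⁻¹).mono_left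
    (nhdsWithin_le_nhds (s := {z | Function.Injective z}))
  rw [circleIntegral_prod_inv_sub_center_smul hR hfR n, smul_smul, div_eq_mul_inv,
    inv_mul_cancel_left₀ two_pi_I_ne_zero] at hlim
  refine hlim.congr' ?_
  filter_upwards [self_mem_nhdsWithin, mem_nhdsWithin_of_mem_nhds hball] with z hz hzR
  rw [circleIntegral_prod_inv_sub_smul hfR hz fun i => hzR i trivial,
    inv_smul_smul₀ two_pi_I_ne_zero]

/-- Let `n` be a positive integer and `g` an analytic function defined
in a neighborhood of `1`. Then the limit, as the tuple `(z_1,…,z_n)` of pairwise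
distinct points tends to `(1,…,1)`, of `∑ i, g (z i) / ∏_{j ≠ i} (z i - z j)`
equals `g^{(n-1)}(1) / (n-1)!`. -/
theorem staircase_limit_div_diff (n : ℕ) (hn : 1 ≤ n) (g : ℂ → ℂ)
    (U : Set ℂ) (hU : U ∈ 𝓝 (1 : ℂ)) (hg : AnalyticOn ℂ g U) :
    Tendsto
      (fun z : Fin n → ℂ =>
        ∑ i : Fin n, g (z i) / ∏ j ∈ Finset.univ.erase i, (z i - z j))
      (𝓝[{z : Fin n → ℂ | Function.Injective z}] (fun _ => (1 : ℂ)))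
      (𝓝 (iteratedDeriv (n - 1) g 1 / (Nat.factorial (n - 1)))) := by
  obtain ⟨m, rfl⟩ : ∃ m, n = m + 1 := ⟨n - 1, by omega⟩
  convert tendsto_sum_nodalWeight_smul hU hg.differentiableOn m using 2 with z
  · simp only [nodalWeight, prod_inv_distrib, smul_eq_mul, div_eq_inv_mul]
  · rw [Nat.add_sub_cancel, smul_eq_mul, div_eq_inv_mul]
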